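/- Let r : U → ℝ³ \ {0} be a conformal immersion with conformal factor e^α, unit normal n, and satisfying r_{z z̄} = e^α U n for a real function U. Then the inverted surface r̃ = -r/|r|² satisfies ⟨r̃_{z z̄}, ñ⟩ = ⟨r_{z z̄}, n⟩/|r|² + 2⟨r,n⟩⟨r_z, r_z̄⟩/|r|⁴, where ñ = -n + 2r⟨r,n⟩/|r|². -/

import Mathlib

/-- Wirtinger derivative `∂ = (1/2)(∂ₓ - i ∂_y)`. -/
noncomputable def wder (f : ℂ → ℂ) (z : ℂ) : ℂ :=
  (1 / 2) * (fderiv ℝ f z 1 - Complex.I * fderiv ℝ f z Complex.I)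

/-- Wirtinger derivative `∂̄ = (1/2)(∂ₓ + i ∂_y)`. -/
noncomputable def wderbar (f : ℂ → ℂ) (z : ℂ) : ℂ :=
  (1 / 2) * (fderiv ℝ f z 1 + Complex.I * fderiv ℝ f z Complex.I)

/-- Complexified `k`-th coordinate of `r`. -/
noncomputable def coordC (r : ℂ → Fin 3 → ℝ) (k : Fin 3) : ℂ → ℂ :=
  fun w => ((r w k : ℝ) : ℂ)

lemma wder_add {f g : ℂ → ℂ} {z : ℂ} (hf : DifferentiableAt ℝ f z)
    (hg : DifferentiableAt ℝ g z) :
    wder (fun w => f w + g w) z = wder f z + wder g z := by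
  unfold wder; rw [fderiv_fun_add hf hg]; simp; ring

lemma wderbar_add {f g : ℂ → ℂ} {z : ℂ} (hf : DifferentiableAt ℝ f z)
    (hg : DifferentiableAt ℝ g z) :
    wderbar (fun w => f w + g w) z = wderbar f z + wderbar g z := by
  unfold wderbar; rw [fderiv_fun_add hf hg]; simp; ring

lemma wder_mul {f g : ℂ → ℂ} {z : ℂ} (hf : DifferentiableAt ℝ f z)
    (hg : DifferentiableAt ℝ g z) :
    wder (fun w => f w * g w) z = wder f z * g z + f z * wder g z := by
  unfold wder; rw [fderiv_fun_mul hf hg]; simp [smul_eq_mul]; ring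

lemma wderbar_mul {f g : ℂ → ℂ} {z : ℂ} (hf : DifferentiableAt ℝ f z)
    (hg : DifferentiableAt ℝ g z) :
    wderbar (fun w => f w * g w) z = wderbar f z * g z + f z * wderbar g z := by
  unfold wderbar; rw [fderiv_fun_mul hf hg]; simp [smul_eq_mul]; ring

lemma wder_const (c : ℂ) (z : ℂ) : wder (fun _ => c) z = 0 := by
  unfold wder; simp

lemma wderbar_const (c : ℂ) (z : ℂ) : wderbar (fun _ => c) z = 0 := by
  unfold wderbar; simp

lemma wder_sum {ι : Type*} {s : Finset ι} {f : ι → ℂ → ℂ} {z : ℂ}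
    (h : ∀ i ∈ s, DifferentiableAt ℝ (f i) z) :
    wder (fun w => ∑ i ∈ s, f i w) z = ∑ i ∈ s, wder (f i) z := by
  unfold wder; rw [fderiv_fun_sum h]
  simp only [ContinuousLinearMap.sum_apply]
  rw [Finset.mul_sum, ← Finset.sum_sub_distrib, Finset.mul_sum]

lemma wderbar_sum {ι : Type*} {s : Finset ι} {f : ι → ℂ → ℂ} {z : ℂ}
    (h : ∀ i ∈ s, DifferentiableAt ℝ (f i) z) :
    wderbar (fun w => ∑ i ∈ s, f i w) z = ∑ i ∈ s, wderbar (f i) z := by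
  unfold wderbar; rw [fderiv_fun_sum h]
  simp only [ContinuousLinearMap.sum_apply]
  rw [Finset.mul_sum, ← Finset.sum_add_distrib, Finset.mul_sum]

lemma wder_neg {f : ℂ → ℂ} {z : ℂ} : wder (fun w => -(f w)) z = -(wder f z) := by
  unfold wder; rw [fderiv_fun_neg]; simp; ring

lemma wderbar_neg {f : ℂ → ℂ} {z : ℂ} : wderbar (fun w => -(f w)) z = -(wderbar f z) := by
  unfold wderbar; rw [fderiv_fun_neg]; simp; ring

lemma wder_inv {f : ℂ → ℂ} {z : ℂ} (hf : DifferentiableAt ℝ f z) (h0 : ∀ w, f w ≠ 0) :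
    wder (fun w => (f w)⁻¹) z = -(wder f z) * ((f z)⁻¹) ^ 2 := by
  have hu : DifferentiableAt ℝ (fun w => (f w)⁻¹) z := hf.inv (h0 z)
  have h1 : wder (fun w => (f w)⁻¹ * f w) z = 0 := by
    have he : (fun w => (f w)⁻¹ * f w) = fun _ => (1 : ℂ) :=
      funext fun w => inv_mul_cancel₀ (h0 w)
    rw [he]; exact wder_const 1 z
  have h2 := wder_mul hu hf
  rw [h1] at h2
  field_simp [h0 z] at h2 ⊢
  linear_combination -h2

lemma wderbar_inv {f : ℂ → ℂ} {z : ℂ} (hf : DifferentiableAt ℝ f z) (h0 : ∀ w, f w ≠ 0) :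
    wderbar (fun w => (f w)⁻¹) z = -(wderbar f z) * ((f z)⁻¹) ^ 2 := by
  have hu : DifferentiableAt ℝ (fun w => (f w)⁻¹) z := hf.inv (h0 z)
  have h1 : wderbar (fun w => (f w)⁻¹ * f w) z = 0 := by
    have he : (fun w => (f w)⁻¹ * f w) = fun _ => (1 : ℂ) :=
      funext fun w => inv_mul_cancel₀ (h0 w)
    rw [he]; exact wderbar_const 1 z
  have h2 := wderbar_mul hu hf
  rw [h1] at h2
  field_simp [h0 z] at h2 ⊢
  linear_combination -h2

lemma contDiff_wder {f : ℂ → ℂ} (hf : ContDiff ℝ (⊤ : ℕ∞) f) : ContDiff ℝ (⊤ : ℕ∞) (fun z => wder f z) := by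
  have h1 : ContDiff ℝ (⊤ : ℕ∞) (fun z => fderiv ℝ f z 1) :=
    (hf.fderiv_right (by simp)).clm_apply contDiff_const
  have h2 : ContDiff ℝ (⊤ : ℕ∞) (fun z => fderiv ℝ f z Complex.I) :=
    (hf.fderiv_right (by simp)).clm_apply contDiff_const
  exact contDiff_const.mul (h1.sub (contDiff_const.mul h2))

lemma contDiff_wderbar {f : ℂ → ℂ} (hf : ContDiff ℝ (⊤ : ℕ∞) f) : ContDiff ℝ (⊤ : ℕ∞) (fun z => wderbar f z) := by
  have h1 : ContDiff ℝ (⊤ : ℕ∞) (fun z => fderiv ℝ f z 1) :=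
    (hf.fderiv_right (by simp)).clm_apply contDiff_const
  have h2 : ContDiff ℝ (⊤ : ℕ∞) (fun z => fderiv ℝ f z Complex.I) :=
    (hf.fderiv_right (by simp)).clm_apply contDiff_const
  exact contDiff_const.mul (h1.add (contDiff_const.mul h2))

lemma wder_sq {e : ℂ → ℂ} {z : ℂ} (he : DifferentiableAt ℝ e z) :
    wder (fun w => e w ^ 2) z = 2 * e z * wder e z := by
  rw [show (fun w => e w ^ 2) = fun w => e w * e w from funext fun w => by ring]
  rw [wder_mul he he]; ring

lemma wderbar_sq {e : ℂ → ℂ} {z : ℂ} (he : DifferentiableAt ℝ e z) :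
    wderbar (fun w => e w ^ 2) z = 2 * e z * wderbar e z := by
  rw [show (fun w => e w ^ 2) = fun w => e w * e w from funext fun w => by ring]
  rw [wderbar_mul he he]; ring

lemma wder_neg_div {f σ : ℂ → ℂ} (hf : ContDiff ℝ (⊤ : ℕ∞) f) (hσ : ContDiff ℝ (⊤ : ℕ∞) σ)
    (h0 : ∀ w, σ w ≠ 0) (w : ℂ) :
    wder (fun v => -(f v) * (σ v)⁻¹) w
      = (-(wder f w)) * (σ w)⁻¹ + (f w * wder σ w) * ((σ w)⁻¹ * (σ w)⁻¹) := by
  have hfd := (hf.differentiable (by simp)) w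
  have hσd := (hσ.differentiable (by simp)) w
  rw [wder_mul hfd.fun_neg (hσd.fun_inv (h0 w)), wder_neg, wder_inv hσd h0]
  ring

lemma wderbar_wder_neg_div {f σ : ℂ → ℂ} (hf : ContDiff ℝ (⊤ : ℕ∞) f) (hσ : ContDiff ℝ (⊤ : ℕ∞) σ)
    (h0 : ∀ w, σ w ≠ 0) (p : ℂ) :
    wderbar (fun w => wder (fun v => -(f v) * (σ v)⁻¹) w) p
      = -(wderbar (fun w => wder f w) p) * (σ p)⁻¹
        + wder f p * wderbar σ p * ((σ p)⁻¹) ^ 2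
        + wderbar f p * wder σ p * ((σ p)⁻¹) ^ 2
        + f p * wderbar (fun w => wder σ w) p * ((σ p)⁻¹) ^ 2
        - 2 * f p * wder σ p * wderbar σ p * ((σ p)⁻¹) ^ 3 := by
  have hσd : ∀ w, DifferentiableAt ℝ σ w := fun w => (hσ.differentiable (by simp)) w
  have hA : ContDiff ℝ (⊤ : ℕ∞) (fun w => wder f w) := contDiff_wder hf
  have hS : ContDiff ℝ (⊤ : ℕ∞) (fun w => wder σ w) := contDiff_wder hσ
  have hg : ContDiff ℝ (⊤ : ℕ∞) (fun w => (σ w)⁻¹) := hσ.inv h0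
  have heq : (fun w => wder (fun v => -(f v) * (σ v)⁻¹) w)
      = fun w => (-(wder f w)) * (σ w)⁻¹ + (f w * wder σ w) * ((σ w)⁻¹ * (σ w)⁻¹) :=
    funext fun w => wder_neg_div hf hσ h0 w
  rw [heq]
  have d1 : DifferentiableAt ℝ (fun w => (-(wder f w)) * (σ w)⁻¹) p :=
    ((hA.neg.mul hg).differentiable (by simp)) p
  have d2 : DifferentiableAt ℝ (fun w => (f w * wder σ w) * ((σ w)⁻¹ * (σ w)⁻¹)) p :=
    (((hf.mul hS).mul (hg.mul hg)).differentiable (by simp)) p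
  have e1 : wderbar (fun w => (-(wder f w)) * (σ w)⁻¹) p
      = -(wderbar (fun w => wder f w) p) * (σ p)⁻¹
        + (-(wder f p)) * (-(wderbar σ p) * ((σ p)⁻¹) ^ 2) := by
    rw [wderbar_mul ((hA.neg.differentiable (by simp)) p) ((hg.differentiable (by simp)) p),
      wderbar_neg, wderbar_inv (hσd p) h0]
  have e2 : wderbar (fun w => (f w * wder σ w) * ((σ w)⁻¹ * (σ w)⁻¹)) p
      = (wderbar f p * wder σ p + f p * wderbar (fun w => wder σ w) p) * ((σ p)⁻¹ * (σ p)⁻¹)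
        + (f p * wder σ p) * ((-(wderbar σ p) * ((σ p)⁻¹) ^ 2) * (σ p)⁻¹
            + (σ p)⁻¹ * (-(wderbar σ p) * ((σ p)⁻¹) ^ 2)) := by
    rw [wderbar_mul (((hf.mul hS).differentiable (by simp)) p) (((hg.mul hg).differentiable (by simp)) p),
      wderbar_mul ((hf.differentiable (by simp)) p) ((hS.differentiable (by simp)) p),
      wderbar_mul ((hg.differentiable (by simp)) p) ((hg.differentiable (by simp)) p),
      wderbar_inv (hσd p) h0]
  rw [wderbar_add d1 d2, e1, e2]
  ring

lemma wder_sumsq (F : Fin 3 → ℂ → ℂ) (hF : ∀ k, ContDiff ℝ (⊤ : ℕ∞) (F k)) (w : ℂ) :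
    wder (fun v => ∑ j : Fin 3, F j v ^ 2) w = ∑ j : Fin 3, 2 * F j w * wder (F j) w := by
  rw [wder_sum (fun i _ => (((hF i).pow 2).differentiable (by simp)) w)]
  exact Finset.sum_congr rfl fun j _ => wder_sq (((hF j).differentiable (by simp)) w)

lemma wderbar_sumsq (F : Fin 3 → ℂ → ℂ) (hF : ∀ k, ContDiff ℝ (⊤ : ℕ∞) (F k)) (w : ℂ) :
    wderbar (fun v => ∑ j : Fin 3, F j v ^ 2) w = ∑ j : Fin 3, 2 * F j w * wderbar (F j) w := by
  rw [wderbar_sum (fun i _ => (((hF i).pow 2).differentiable (by simp)) w)]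
  exact Finset.sum_congr rfl fun j _ => wderbar_sq (((hF j).differentiable (by simp)) w)

lemma wderbar_wder_sumsq (F : Fin 3 → ℂ → ℂ) (hF : ∀ k, ContDiff ℝ (⊤ : ℕ∞) (F k)) (p : ℂ) :
    wderbar (fun w => wder (fun v => ∑ j : Fin 3, F j v ^ 2) w) p
      = ∑ j : Fin 3, (2 * wderbar (F j) p * wder (F j) p
          + 2 * F j p * wderbar (fun w => wder (F j) w) p) := by
  have heq : (fun w => wder (fun v => ∑ j : Fin 3, F j v ^ 2) w)
      = fun w => ∑ j : Fin 3, 2 * F j w * wder (F j) w := funext (wder_sumsq F hF)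
  rw [heq, wderbar_sum (fun i _ =>
    (((contDiff_const.mul (hF i)).mul (contDiff_wder (hF i))).differentiable (by simp)) p)]
  refine Finset.sum_congr rfl fun j _ => ?_
  rw [wderbar_mul (((contDiff_const.mul (hF j)).differentiable (by simp)) p)
      (((contDiff_wder (hF j)).differentiable (by simp)) p),
    wderbar_mul (differentiableAt_const 2) (((hF j).differentiable (by simp)) p),
    wderbar_const]
  ring


lemma final_alg (fp a b nn : Fin 3 → ℂ) (c : ℂ)
    (hσ : (∑ j : Fin 3, fp j ^ 2) ≠ 0)
    (hEa : ∑ k : Fin 3, nn k * a k = 0)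
    (hEb : ∑ k : Fin 3, nn k * b k = 0)
    (hN : ∑ k : Fin 3, nn k ^ 2 = 1) :
    ∑ k : Fin 3,
      (-(c * nn k) * (∑ j : Fin 3, fp j ^ 2)⁻¹ +
            (a k * ∑ j : Fin 3, 2 * fp j * b j) * (∑ j : Fin 3, fp j ^ 2)⁻¹ ^ 2 +
          (b k * ∑ j : Fin 3, 2 * fp j * a j) * (∑ j : Fin 3, fp j ^ 2)⁻¹ ^ 2 +
        (fp k * ∑ j : Fin 3, (2 * b j * a j + 2 * fp j * (c * nn j))) * (∑ j : Fin 3, fp j ^ 2)⁻¹ ^ 2 -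
        ((2 * fp k * ∑ j : Fin 3, 2 * fp j * a j) * ∑ j : Fin 3, 2 * fp j * b j) *
          (∑ j : Fin 3, fp j ^ 2)⁻¹ ^ 3) *
      (-(nn k) + (2 * fp k * ∑ j : Fin 3, fp j * nn j) * (∑ j : Fin 3, fp j ^ 2)⁻¹)
    = (∑ k : Fin 3, c * nn k * nn k) / (∑ j : Fin 3, fp j ^ 2) +
      ((2 * ∑ j : Fin 3, fp j * nn j) * ∑ k : Fin 3, a k * b k) / (∑ j : Fin 3, fp j ^ 2) ^ 2 := by
  have h1 : (∑ j : Fin 3, 2 * fp j * a j) = 2 * ∑ j : Fin 3, fp j * a j := by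
    rw [Finset.mul_sum]; exact Finset.sum_congr rfl fun j _ => by ring
  have h2 : (∑ j : Fin 3, 2 * fp j * b j) = 2 * ∑ j : Fin 3, fp j * b j := by
    rw [Finset.mul_sum]; exact Finset.sum_congr rfl fun j _ => by ring
  have h3 : (∑ j : Fin 3, (2 * b j * a j + 2 * fp j * (c * nn j)))
      = 2 * (∑ j : Fin 3, a j * b j) + 2 * c * (∑ j : Fin 3, fp j * nn j) := by
    rw [Finset.sum_add_distrib, Finset.mul_sum, Finset.mul_sum]
    congr 1
    · exact Finset.sum_congr rfl fun j _ => by ring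
    · exact Finset.sum_congr rfl fun j _ => by ring
  have h4 : (∑ k : Fin 3, c * nn k * nn k) = c := by
    have : (∑ k : Fin 3, c * nn k * nn k) = c * ∑ k : Fin 3, nn k ^ 2 := by
      rw [Finset.mul_sum]; exact Finset.sum_congr rfl fun j _ => by ring
    rw [this, hN, mul_one]
  simp only [h1, h2, h3, h4]
  trans (∑ k : Fin 3,
      ((c * (∑ j : Fin 3, fp j ^ 2)⁻¹) * nn k ^ 2
        + (-(2 * (∑ j : Fin 3, fp j * b j) * (∑ j : Fin 3, fp j ^ 2)⁻¹ ^ 2)) * (nn k * a k)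
        + (-(2 * (∑ j : Fin 3, fp j * a j) * (∑ j : Fin 3, fp j ^ 2)⁻¹ ^ 2)) * (nn k * b k)
        + (-(2 * (∑ j : Fin 3, a j * b j) * (∑ j : Fin 3, fp j ^ 2)⁻¹ ^ 2)
            - 4 * c * (∑ j : Fin 3, fp j * nn j) * (∑ j : Fin 3, fp j ^ 2)⁻¹ ^ 2
            + 8 * (∑ j : Fin 3, fp j * a j) * (∑ j : Fin 3, fp j * b j)
                * (∑ j : Fin 3, fp j ^ 2)⁻¹ ^ 3) * (fp k * nn k)
        + (4 * (∑ j : Fin 3, fp j * b j) * (∑ j : Fin 3, fp j * nn j)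
            * (∑ j : Fin 3, fp j ^ 2)⁻¹ ^ 3) * (fp k * a k)
        + (4 * (∑ j : Fin 3, fp j * a j) * (∑ j : Fin 3, fp j * nn j)
            * (∑ j : Fin 3, fp j ^ 2)⁻¹ ^ 3) * (fp k * b k)
        + (4 * (∑ j : Fin 3, a j * b j) * (∑ j : Fin 3, fp j * nn j)
              * (∑ j : Fin 3, fp j ^ 2)⁻¹ ^ 3
            + 4 * c * (∑ j : Fin 3, fp j * nn j) ^ 2 * (∑ j : Fin 3, fp j ^ 2)⁻¹ ^ 3
            - 16 * (∑ j : Fin 3, fp j * a j) * (∑ j : Fin 3, fp j * b j)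
                * (∑ j : Fin 3, fp j * nn j) * (∑ j : Fin 3, fp j ^ 2)⁻¹ ^ 4) * (fp k ^ 2)))
  · exact Finset.sum_congr rfl fun k _ => by ring
  · simp only [Finset.sum_add_distrib, ← Finset.mul_sum]
    rw [hEa, hEb, hN]
    simp only [div_eq_mul_inv, ← inv_pow]
    set g := (∑ j : Fin 3, fp j ^ 2)⁻¹ with hgdef
    have hg1 : (∑ j : Fin 3, fp j ^ 2) * g = 1 := mul_inv_cancel₀ hσ
    linear_combination (4 * (∑ j : Fin 3, a j * b j) * (∑ j : Fin 3, fp j * nn j) * g ^ 2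
      + 4 * c * (∑ j : Fin 3, fp j * nn j) ^ 2 * g ^ 2
      - 16 * (∑ j : Fin 3, fp j * a j) * (∑ j : Fin 3, fp j * b j)
          * (∑ j : Fin 3, fp j * nn j) * g ^ 3) * hg1

/-- for a conformal immersion `r : U → ℝ³ \ {0}` with unit normal `n` and
`r_{zz̄} = e^α U n`, the inverted surface `r̃ = -r/|r|²` satisfies
`⟨r̃_{zz̄}, ñ⟩ = ⟨r_{zz̄}, n⟩/|r|² + 2⟨r,n⟩⟨r_z, r_z̄⟩/|r|⁴` where
`ñ = -n + 2r⟨r,n⟩/|r|²`. -/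
theorem inverted_surface_second_derivative (r : ℂ → Fin 3 → ℝ) (n : ℂ → Fin 3 → ℝ)
    (α U : ℂ → ℝ) (p : ℂ)
    (hsm : ∀ k, ContDiff ℝ (⊤ : ℕ∞) (coordC r k))
    (hr0 : ∀ z, r z ≠ 0)
    (hunit : ∀ z, ∑ k : Fin 3, n z k ^ 2 = 1)
    (horth : ∀ z, ∑ k : Fin 3, ((n z k : ℝ) : ℂ) * wder (coordC r k) z = 0)
    (horthb : ∀ z, ∑ k : Fin 3, ((n z k : ℝ) : ℂ) * wderbar (coordC r k) z = 0)
    (hdirac : ∀ z k, wderbar (fun w => wder (coordC r k) w) z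
        = ((Real.exp (α z) * U z * n z k : ℝ) : ℂ)) :
    -- `⟨r̃_{zz̄}, ñ⟩` at `p` …
    ∑ k : Fin 3,
        wderbar (fun w =>
            wder (fun v => ((-(r v k) / (∑ j : Fin 3, r v j ^ 2) : ℝ) : ℂ)) w) p *
          ((-(n p k) + 2 * r p k * (∑ j : Fin 3, r p j * n p j)
              / (∑ j : Fin 3, r p j ^ 2) : ℝ) : ℂ)
      -- … equals `⟨r_{zz̄}, n⟩/|r|² + 2⟨r,n⟩⟨r_z, r_z̄⟩/|r|⁴`.
      = (∑ k : Fin 3, wderbar (fun w => wder (coordC r k) w) p * ((n p k : ℝ) : ℂ))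
          / ((∑ j : Fin 3, r p j ^ 2 : ℝ) : ℂ)
        + 2 * (((∑ j : Fin 3, r p j * n p j : ℝ) : ℂ))
            * (∑ k : Fin 3, wder (coordC r k) p * wderbar (coordC r k) p)
            / (((∑ j : Fin 3, r p j ^ 2 : ℝ) : ℂ) ^ 2) := by
  have hσsm : ContDiff ℝ (⊤ : ℕ∞) (fun w => ∑ j : Fin 3, coordC r j w ^ 2) :=
    ContDiff.sum fun j _ => (hsm j).pow 2
  have hσcast : ∀ w : ℂ, ((∑ j : Fin 3, r w j ^ 2 : ℝ) : ℂ) = ∑ j : Fin 3, coordC r j w ^ 2 := by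
    intro w; push_cast [coordC]; rfl
  have hσne : ∀ w : ℂ, (∑ j : Fin 3, coordC r j w ^ 2) ≠ 0 := by
    intro w; rw [← hσcast w]
    have hpos : 0 < ∑ j : Fin 3, r w j ^ 2 := by
      obtain ⟨j, hj⟩ := Function.ne_iff.mp (hr0 w)
      exact Finset.sum_pos' (fun i _ => sq_nonneg _) ⟨j, Finset.mem_univ j, pow_two_pos_of_ne_zero (by simpa using hj)⟩
    exact_mod_cast hpos.ne'
  have hfun : ∀ k : Fin 3, (fun v => ((-(r v k) / (∑ j : Fin 3, r v j ^ 2) : ℝ) : ℂ))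
      = fun v => -(coordC r k v) * ((∑ j : Fin 3, coordC r j v ^ 2)⁻¹) := by
    intro k; funext v
    rw [Complex.ofReal_div, div_eq_mul_inv, hσcast v, Complex.ofReal_neg]
    rfl
  have hscast : ((∑ j : Fin 3, r p j * n p j : ℝ) : ℂ)
      = ∑ j : Fin 3, coordC r j p * ((n p j : ℝ) : ℂ) := by
    push_cast [coordC]; rfl
  have hnt : ∀ k : Fin 3, ((-(n p k) + 2 * r p k * (∑ j : Fin 3, r p j * n p j)
        / (∑ j : Fin 3, r p j ^ 2) : ℝ) : ℂ)
      = -((n p k : ℝ) : ℂ) + 2 * coordC r k p * (∑ j : Fin 3, coordC r j p * ((n p j : ℝ) : ℂ))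
          * (∑ j : Fin 3, coordC r j p ^ 2)⁻¹ := by
    intro k
    simp only [coordC]
    push_cast
    rw [div_eq_mul_inv]
  have step1 : (∑ k : Fin 3,
        wderbar (fun w =>
            wder (fun v => ((-(r v k) / (∑ j : Fin 3, r v j ^ 2) : ℝ) : ℂ)) w) p *
          ((-(n p k) + 2 * r p k * (∑ j : Fin 3, r p j * n p j)
              / (∑ j : Fin 3, r p j ^ 2) : ℝ) : ℂ))
      = ∑ k : Fin 3,
        (-(wderbar (fun w => wder (coordC r k) w) p) * ((∑ j : Fin 3, coordC r j p ^ 2)⁻¹)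
          + wder (coordC r k) p * wderbar (fun w => ∑ j : Fin 3, coordC r j w ^ 2) p
              * (((∑ j : Fin 3, coordC r j p ^ 2)⁻¹) ^ 2)
          + wderbar (coordC r k) p * wder (fun w => ∑ j : Fin 3, coordC r j w ^ 2) p
              * (((∑ j : Fin 3, coordC r j p ^ 2)⁻¹) ^ 2)
          + coordC r k p * wderbar (fun w => wder (fun v => ∑ j : Fin 3, coordC r j v ^ 2) w) p
              * (((∑ j : Fin 3, coordC r j p ^ 2)⁻¹) ^ 2)
          - 2 * coordC r k p * wder (fun w => ∑ j : Fin 3, coordC r j w ^ 2) p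
              * wderbar (fun w => ∑ j : Fin 3, coordC r j w ^ 2) p
              * (((∑ j : Fin 3, coordC r j p ^ 2)⁻¹) ^ 3))
        * (-((n p k : ℝ) : ℂ) + 2 * coordC r k p
            * (∑ j : Fin 3, coordC r j p * ((n p j : ℝ) : ℂ))
            * (∑ j : Fin 3, coordC r j p ^ 2)⁻¹) := by
    refine Finset.sum_congr rfl fun k _ => ?_
    rw [hfun k, wderbar_wder_neg_div (hsm k) hσsm hσne p, hnt k]
  rw [step1, wder_sumsq _ hsm p, wderbar_sumsq _ hsm p, wderbar_wder_sumsq _ hsm p,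
    hσcast p, hscast]
  have hC : ∀ k, wderbar (fun w => wder (coordC r k) w) p
      = ((Real.exp (α p) * U p : ℝ) : ℂ) * ((n p k : ℝ) : ℂ) := by
    intro k; rw [hdirac p k, Complex.ofReal_mul]
  simp only [hC]
  have hN : (∑ k : Fin 3, ((n p k : ℝ) : ℂ) ^ 2) = 1 := by
    have h := congrArg (fun x : ℝ => (x : ℂ)) (hunit p)
    push_cast at h
    exact h
  exact final_alg (fun k => coordC r k p) (fun k => wder (coordC r k) p)
    (fun k => wderbar (coordC r k) p) (fun k => ((n p k : ℝ) : ℂ))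
    ((Real.exp (α p) * U p : ℝ) : ℂ) (hσne p) (horth p) (horthb p) hN
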